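/- Let n ≥ 4, S ⊆ {1, …, ⌊n/2⌋}, G = C_n(S), and S̄ = {1, …, ⌊n/2⌋} \ S. The following are equivalent: (1) the complement graph of G is connected, G has no independent set of cardinality 3, and N_2 = n, where N_2 is the number of independent 2-sets of G (i.e., G is Gorenstein of dimension 2, equivalently Cohen–Macaulay of dimension 2 with h_2 = N_2 − n + 1 = 1); (2) S̄ = {i} for some i with gcd(n, i) = 1, i.e., S = {1, …, ⌊n/2⌋} \ {i}; (3) the complement graph of G is isomorphic to the cycle graph on n vertices (an n-gon). -/

import Mathlib

/-- The circulant graph `C_n(S)`: vertices `ZMod n`, with distinct `i, j` adjacent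
iff `|i - j|_n = min ((i-j).val, n - (i-j).val) ∈ S`. -/
def circulant (n : ℕ) (S : Finset ℕ) : SimpleGraph (ZMod n) where
  Adj i j := i ≠ j ∧ min ((i - j).val) (n - (i - j).val) ∈ S
  symm := ⟨by
    rintro i j ⟨hne, hmem⟩
    refine ⟨hne.symm, ?_⟩
    rcases Nat.eq_zero_or_pos n with rfl | hn
    · simpa using hmem
    · haveI : NeZero n := ⟨hn.ne'⟩
      have h1 : j - i = -(i - j) := by ring
      have h0 : i - j ≠ 0 := sub_ne_zero.mpr hne
      rw [h1, ZMod.neg_val, if_neg h0,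
        Nat.sub_sub_self (le_of_lt (ZMod.val_lt _)), min_comm]
      exact hmem⟩
  loopless := ⟨fun i h => h.1 rfl⟩

/-- `Nk n S k` is the number of independent sets of cardinality `k`
in the circulant graph `C_n(S)`. -/
noncomputable def Nk (n : ℕ) (S : Finset ℕ) (k : ℕ) : ℕ :=
  {A : Finset (ZMod n) | A.card = k ∧ ∀ u ∈ A, ∀ v ∈ A, ¬ (circulant n S).Adj u v}.ncard

/-! The complement of `C_n(S)` is the circulant graph `C_n(S̄)`, which is regular of degree
`#{x : |x|_n ∈ S̄}`; by the handshake lemma `2 N_2 = n · #{x : |x|_n ∈ S̄}`. Hence `N_2 = n` forces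
`S̄ = {i}` with `2 i ≠ n`, and `C_n({i})` is connected exactly when `i` is a unit mod `n`. In that
case multiplication by `i` is an isomorphism from the `n`-cycle `C_n({1})`, which is connected,
2-regular and, for `n ≥ 4`, triangle-free. -/

open Finset SimpleGraph

/-- The circular norm `|x|_n` of the paper. -/
def circNorm (n : ℕ) (x : ZMod n) : ℕ := min x.val (n - x.val)

section circulant

variable {n : ℕ}

theorem circulant_adj {S : Finset ℕ} {x y : ZMod n} :
    (circulant n S).Adj x y ↔ x ≠ y ∧ circNorm n (x - y) ∈ S := Iff.rfl

instance (S : Finset ℕ) : DecidableRel (circulant n S).Adj :=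
  fun _ _ => inferInstanceAs (Decidable (_ ∧ _))

theorem circulant_adj_of_subset {D : Finset ℕ} (hD : D ⊆ Icc 1 (n / 2)) {x y : ZMod n} :
    (circulant n D).Adj x y ↔ circNorm n (x - y) ∈ D := by
  refine ⟨And.right, fun h => ⟨fun hxy => ?_, h⟩⟩
  have := mem_Icc.mp (hD h)
  rw [hxy, sub_self, circNorm, ZMod.val_zero] at this
  omega

variable [NeZero n]

theorem circNorm_natCast {d : ℕ} (hd : d ≤ n / 2) : circNorm n d = d := by
  have hdn : d < n := by have := NeZero.pos n; omega
  rw [circNorm, ZMod.val_cast_of_lt hdn]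
  omega

theorem circNorm_neg (x : ZMod n) : circNorm n (-x) = circNorm n x := by
  rcases eq_or_ne x 0 with rfl | hx
  · rw [neg_zero]
  · rw [circNorm, circNorm, ZMod.neg_val, if_neg hx, Nat.sub_sub_self (ZMod.val_lt x).le, min_comm]

theorem circNorm_mem_Icc {x : ZMod n} (hx : x ≠ 0) : circNorm n x ∈ Icc 1 (n / 2) := by
  have := ZMod.val_lt x
  have := (ZMod.val_ne_zero x).mpr hx
  simp only [circNorm, mem_Icc]
  omega

theorem circNorm_eq_iff {d : ℕ} (hd : d ≤ n / 2) {x : ZMod n} :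
    circNorm n x = d ↔ x = d ∨ x = -d := by
  refine ⟨fun h => ?_, ?_⟩
  · have hx : (x.val : ZMod n) = x := ZMod.natCast_zmod_val x
    have := ZMod.val_lt x
    rcases le_total x.val (n - x.val) with hle | hle
    · rw [circNorm, min_eq_left hle] at h
      exact .inl (by rw [← hx, h])
    · rw [circNorm, min_eq_right hle] at h
      refine .inr ?_
      rw [← hx, show x.val = n - d by omega, Nat.cast_sub (by omega), ZMod.natCast_self, zero_sub]
  · rintro (rfl | rfl)
    · exact circNorm_natCast hd
    · rw [circNorm_neg, circNorm_natCast hd]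

theorem compl_circulant (S : Finset ℕ) :
    (circulant n S)ᶜ = circulant n (Icc 1 (n / 2) \ S) := by
  ext x y
  simp only [compl_adj, circulant_adj, mem_sdiff]
  exact ⟨fun ⟨hne, h⟩ => ⟨hne, circNorm_mem_Icc (sub_ne_zero.mpr hne), fun hS => h ⟨hne, hS⟩⟩,
    fun ⟨hne, _, h⟩ => ⟨hne, fun hS => h hS.2⟩⟩

theorem circulant_singleton_adj {d : ℕ} (hd₁ : 1 ≤ d) (hd₂ : d ≤ n / 2) {x y : ZMod n} :
    (circulant n {d}).Adj x y ↔ x - y = d ∨ x - y = -d := by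
  rw [circulant_adj_of_subset (by simp [hd₁, hd₂]), mem_singleton, circNorm_eq_iff hd₂]

theorem card_circNorm_eq {d : ℕ} (hd₁ : 1 ≤ d) (hd₂ : d ≤ n / 2) :
    #{x : ZMod n | circNorm n x = d} = if 2 * d = n then 1 else 2 := by
  have hfib : ({x : ZMod n | circNorm n x = d} : Finset _) = {(d : ZMod n), -(d : ZMod n)} := by
    ext x
    simp [circNorm_eq_iff hd₂]
  have hneg : -(d : ZMod n) = d ↔ 2 * d = n := by
    rw [neg_eq_iff_add_eq_zero, ← two_mul, ← Nat.cast_ofNat, ← Nat.cast_mul,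
      ZMod.natCast_eq_zero_iff]
    exact ⟨fun h => Nat.eq_of_dvd_of_lt_two_mul (by omega) h (by omega), fun h => h ▸ dvd_rfl⟩
  rw [hfib]
  split_ifs with h
  · rw [hneg.mpr h, pair_eq_singleton, card_singleton]
  · exact card_pair fun h' => h (hneg.mp h'.symm)

theorem card_circNorm_mem {D : Finset ℕ} (hD : D ⊆ Icc 1 (n / 2)) :
    #{x : ZMod n | circNorm n x ∈ D} = ∑ d ∈ D, if 2 * d = n then 1 else 2 := by
  rw [card_eq_sum_card_fiberwise (f := circNorm n) (s := {x : ZMod n | circNorm n x ∈ D}) (t := D)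
    fun x hx => (mem_filter.mp hx).2]
  refine sum_congr rfl fun d hd => ?_
  obtain ⟨hd₁, hd₂⟩ := mem_Icc.mp (hD hd)
  rw [← card_circNorm_eq hd₁ hd₂, filter_filter]
  congr 1
  exact filter_congr fun x _ => ⟨And.right, fun h => ⟨h ▸ hd, h⟩⟩

/-- Each `d ∈ D` contributes the two residues `±d`, which coincide only for `2 * d = n`. -/
theorem exists_eq_singleton_of_card_circNorm_mem_eq_two {D : Finset ℕ} (hD : D ⊆ Icc 1 (n / 2))
    (h : #{x : ZMod n | circNorm n x ∈ D} = 2) : ∃ d, D = {d} := by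
  rw [card_circNorm_mem hD] at h
  have hcard : #D ≤ 2 := by
    have := card_nsmul_le_sum D (fun d => if 2 * d = n then 1 else 2) 1
      fun d _ => by split_ifs <;> omega
    rwa [smul_eq_mul, mul_one, h] at this
  interval_cases hD' : #D
  · simp [card_eq_zero.mp hD'] at h
  · exact card_eq_one.mp hD'
  · obtain ⟨a, b, hab, rfl⟩ := card_eq_two.mp hD'
    rw [sum_pair hab] at h
    split_ifs at h <;> omega

theorem circulant_isRegularOfDegree {D : Finset ℕ} (hD : D ⊆ Icc 1 (n / 2)) :
    (circulant n D).IsRegularOfDegree #{x : ZMod n | circNorm n x ∈ D} := by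
  intro v
  rw [← card_neighborFinset_eq_degree, neighborFinset_eq_filter]
  refine card_nbij' (v - ·) (v - ·) ?_ ?_ (fun _ _ => sub_sub_cancel v _)
    (fun _ _ => sub_sub_cancel v _)
  · intro w hw
    simpa [circulant_adj_of_subset hD] using hw
  · intro x hx
    simpa [circulant_adj_of_subset hD] using hx

end circulant

namespace SimpleGraph

variable {V : Type*} [Fintype V] (G : SimpleGraph V) [DecidableRel G.Adj]

theorem ncard_indep_pairs_eq_card_edgeFinset_compl [DecidableEq V] :
    {A : Finset V | A.card = 2 ∧ ∀ u ∈ A, ∀ v ∈ A, ¬ G.Adj u v}.ncard = #Gᶜ.edgeFinset := by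
  have himage : {A : Finset V | A.card = 2 ∧ ∀ u ∈ A, ∀ v ∈ A, ¬ G.Adj u v}
      = Sym2.toFinset '' Gᶜ.edgeSet := by
    ext A
    constructor
    · rintro ⟨hA, hind⟩
      obtain ⟨u, v, huv, rfl⟩ := card_eq_two.mp hA
      exact ⟨s(u, v), ⟨huv, hind u (by simp) v (by simp)⟩, Sym2.toFinset_mk_eq⟩
    · rintro ⟨e, he, rfl⟩
      induction e using Sym2.ind with
      | h u v =>
        obtain ⟨huv, hnadj⟩ := he
        refine ⟨by simp [Sym2.toFinset_mk_eq, huv], fun a ha b hb => ?_⟩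
        simp only [Sym2.toFinset_mk_eq, mem_insert, mem_singleton] at ha hb
        rcases ha with rfl | rfl <;> rcases hb with rfl | rfl
        exacts [G.irrefl, hnadj, fun h => hnadj h.symm, G.irrefl]
  have hinj : Function.Injective (Sym2.toFinset : Sym2 V → Finset V) := fun e f h =>
    Sym2.ext fun a => by rw [← Sym2.mem_toFinset, h, Sym2.mem_toFinset]
  rw [himage, Set.ncard_image_of_injective _ hinj, ← coe_edgeFinset, Set.ncard_coe_finset]

variable {G}

theorem IsRegularOfDegree.two_mul_card_edgeFinset {k : ℕ} (h : G.IsRegularOfDegree k) :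
    2 * #G.edgeFinset = Fintype.card V * k := by
  rw [← sum_degrees_eq_twice_card_edges, sum_congr rfl fun v _ => h.degree_eq v, sum_const,
    smul_eq_mul, card_univ]

end SimpleGraph

theorem two_mul_Nk_two {n : ℕ} [NeZero n] (S : Finset ℕ) :
    2 * Nk n S 2 = n * #{x : ZMod n | circNorm n x ∈ Icc 1 (n / 2) \ S} := by
  have hreg :
      (circulant n S)ᶜ.IsRegularOfDegree #{x : ZMod n | circNorm n x ∈ Icc 1 (n / 2) \ S} := by
    convert circulant_isRegularOfDegree sdiff_subset using 1
    exact compl_circulant S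
  rw [Nk, ncard_indep_pairs_eq_card_edgeFinset_compl, hreg.two_mul_card_edgeFinset, ZMod.card]

section cycle

variable {n : ℕ} [NeZero n]

theorem circulant_singleton_sub_mem_zmultiples {d : ℕ} (hd₁ : 1 ≤ d) (hd₂ : d ≤ n / 2)
    {x y : ZMod n} (h : (circulant n {d}).Reachable x y) :
    x - y ∈ AddSubgroup.zmultiples (d : ZMod n) := by
  obtain ⟨w⟩ := h
  induction w with
  | nil => simp
  | @cons a b c hab _ ih =>
    rw [← sub_add_sub_cancel a b c]
    refine add_mem ?_ ih
    rcases (circulant_singleton_adj hd₁ hd₂).mp hab with h | h <;> rw [h]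
    exacts [AddSubgroup.mem_zmultiples _, neg_mem (AddSubgroup.mem_zmultiples _)]

/-- In a connected circulant graph `1` is a multiple of the jump, which is therefore a unit. -/
theorem coprime_of_circulant_singleton_connected {d : ℕ} (hd₁ : 1 ≤ d) (hd₂ : d ≤ n / 2)
    (hc : (circulant n {d}).Connected) : n.Coprime d := by
  obtain ⟨k, hk⟩ := AddSubgroup.mem_zmultiples_iff.mp
    (circulant_singleton_sub_mem_zmultiples hd₁ hd₂ (hc.preconnected 1 0))
  rw [sub_zero, zsmul_eq_mul] at hk
  exact ((ZMod.isUnit_iff_coprime d n).mp (IsUnit.of_mul_eq_one_right _ hk)).symm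

def circulantOneIso {d : ℕ} (hd₁ : 1 ≤ d) (hd₂ : d ≤ n / 2) (hcop : n.Coprime d) :
    circulant n {1} ≃g circulant n {d} where
  toEquiv := (ZMod.unitOfCoprime d hcop.symm).mulRight
  map_rel_iff' {x y} := by
    set u := ZMod.unitOfCoprime d hcop.symm
    have hu : (u : ZMod n) = d := ZMod.coe_unitOfCoprime d hcop.symm
    have hcancel (c : ZMod n) : (x - y) * u = c * u ↔ x - y = c := Units.mul_left_inj u
    simp only [Units.mulRight_apply, circulant_singleton_adj hd₁ hd₂,
      circulant_singleton_adj le_rfl (hd₁.trans hd₂), ← sub_mul, Nat.cast_one, ← hu]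
    rw [← hcancel 1, ← hcancel (-1), one_mul, neg_one_mul]

theorem circulant_one_connected (hn : 2 ≤ n) : (circulant n {1}).Connected := by
  have hstep (k : ℕ) : (circulant n {1}).Adj (k + 1 : ℕ) k := by
    rw [circulant_singleton_adj le_rfl (by omega)]
    left; push_cast; ring
  have hreach (k : ℕ) : (circulant n {1}).Reachable 0 k := by
    induction k with
    | zero => exact_mod_cast Reachable.refl 0
    | succ k ih => exact ih.trans (hstep k).symm.reachable
  have : Nonempty (ZMod n) := ⟨0⟩
  refine ⟨fun x y => ?_⟩
  rw [← ZMod.natCast_zmod_val x, ← ZMod.natCast_zmod_val y]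
  exact (hreach x.val).symm.trans (hreach y.val)

/-- A triangle would need `±1 ± 1 = ±1`, i.e. `1 = 0` or `3 = 0` in `ZMod n`. -/
theorem circulant_one_cliqueFree_three (hn : 4 ≤ n) : (circulant n {1}).CliqueFree 3 := by
  have hne (k : ℕ) (hk₀ : 0 < k) (hk : k < n) : (k : ZMod n) ≠ 0 := fun h =>
    (Nat.le_of_dvd hk₀ ((ZMod.natCast_eq_zero_iff k n).mp h)).not_gt hk
  have h1 : (1 : ZMod n) ≠ 0 := by exact_mod_cast hne 1 one_pos (by omega)
  have h3 : (3 : ZMod n) ≠ 0 := by exact_mod_cast hne 3 three_pos (by omega)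
  intro A hA
  obtain ⟨a, b, c, hab, hac, hbc, -⟩ := is3Clique_iff.mp hA
  simp only [circulant_singleton_adj le_rfl (show 1 ≤ n / 2 by omega), Nat.cast_one] at hab hac hbc
  have hsum : a - c = (a - b) + (b - c) := by ring
  rcases hab with h | h <;> rcases hbc with h' | h' <;> rcases hac with h'' | h'' <;>
    rw [h, h', h''] at hsum
  all_goals first
    | exact h1 (by linear_combination hsum)
    | exact h1 (by linear_combination -hsum)
    | exact h3 (by linear_combination hsum)
    | exact h3 (by linear_combination -hsum)

theorem circulant_one_isRegularOfDegree_two (hn : 3 ≤ n) :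
    (circulant n {1}).IsRegularOfDegree 2 := by
  convert circulant_isRegularOfDegree (n := n) (D := {1}) (by simp; omega)
  simp only [mem_singleton]
  rw [card_circNorm_eq le_rfl (by omega), if_neg (by omega)]

end cycle

/-- Condition (1) of the theorem, the combinatorial form of Gorensteinness of `R/I(C_n(S))` in
dimension 2. -/
def IsGorensteinDimTwo (n : ℕ) (S : Finset ℕ) : Prop :=
  (circulant n S)ᶜ.Connected ∧
    (¬ ∃ A : Finset (ZMod n), A.card = 3 ∧ ∀ u ∈ A, ∀ v ∈ A, ¬ (circulant n S).Adj u v) ∧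
    Nk n S 2 = n

section gorenstein

variable {n : ℕ} {S : Finset ℕ}

theorem IsGorensteinDimTwo.exists_compl_eq_singleton [NeZero n] (hG : IsGorensteinDimTwo n S) :
    ∃ i, n.gcd i = 1 ∧ Icc 1 (n / 2) \ S = {i} := by
  obtain ⟨hconn, -, hN⟩ := hG
  have hdeg : #{x : ZMod n | circNorm n x ∈ Icc 1 (n / 2) \ S} = 2 := by
    have := two_mul_Nk_two (n := n) S
    rw [hN, mul_comm] at this
    exact (Nat.eq_of_mul_eq_mul_left (NeZero.pos n) this).symm
  obtain ⟨i, hi⟩ := exists_eq_singleton_of_card_circNorm_mem_eq_two sdiff_subset hdeg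
  obtain ⟨hi₁, hi₂⟩ := mem_Icc.mp (sdiff_subset (hi ▸ mem_singleton_self i))
  rw [compl_circulant, hi] at hconn
  exact ⟨i, coprime_of_circulant_singleton_connected hi₁ hi₂ hconn, hi⟩

theorem nonempty_iso_circulant_one_of_compl_eq_singleton [NeZero n] {i : ℕ} (hi : n.gcd i = 1)
    (hS : Icc 1 (n / 2) \ S = {i}) : Nonempty ((circulant n S)ᶜ ≃g circulant n {1}) := by
  obtain ⟨hi₁, hi₂⟩ := mem_Icc.mp (sdiff_subset (hS ▸ mem_singleton_self i))
  rw [compl_circulant, hS]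
  exact ⟨(circulantOneIso hi₁ hi₂ hi).symm⟩

theorem isGorensteinDimTwo_of_iso_circulant_one (hn : 4 ≤ n)
    (φ : (circulant n S)ᶜ ≃g circulant n {1}) : IsGorensteinDimTwo n S := by
  have : NeZero n := ⟨by omega⟩
  refine ⟨φ.connected_iff.mpr (circulant_one_connected (by omega)), ?_, ?_⟩
  · rintro ⟨A, hA, hind⟩
    refine (circulant_one_cliqueFree_three hn).comap φ.isContained A ?_
    rw [isNClique_compl, isNIndepSet_iff, isIndepSet_iff]
    exact ⟨fun u hu v hv _ => hind u hu v hv, hA⟩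
  · have h := (circulant_one_isRegularOfDegree_two (n := n) (by omega)).two_mul_card_edgeFinset
    rw [ZMod.card, ← φ.card_edgeFinset_eq, ← ncard_indep_pairs_eq_card_edgeFinset_compl] at h
    rw [Nk]
    omega

end gorenstein

theorem stmt16_general (n : ℕ) (hn : 4 ≤ n) (S : Finset ℕ) :
    (((circulant n S)ᶜ.Connected ∧
        (¬ ∃ A : Finset (ZMod n), A.card = 3 ∧
          ∀ u ∈ A, ∀ v ∈ A, ¬ (circulant n S).Adj u v) ∧
        Nk n S 2 = n)
      ↔ ∃ i : ℕ, Nat.gcd n i = 1 ∧ Finset.Icc 1 (n / 2) \ S = {i})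
    ∧
    (((circulant n S)ᶜ.Connected ∧
        (¬ ∃ A : Finset (ZMod n), A.card = 3 ∧
          ∀ u ∈ A, ∀ v ∈ A, ¬ (circulant n S).Adj u v) ∧
        Nk n S 2 = n)
      ↔ Nonempty ((circulant n S)ᶜ ≃g circulant n ({1} : Finset ℕ))) := by
  have : NeZero n := ⟨by omega⟩
  have h12 (h : IsGorensteinDimTwo n S) := h.exists_compl_eq_singleton
  have h23 : (∃ i, n.gcd i = 1 ∧ Icc 1 (n / 2) \ S = {i}) →
      Nonempty ((circulant n S)ᶜ ≃g circulant n {1}) :=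
    fun ⟨_, hi, hS⟩ => nonempty_iso_circulant_one_of_compl_eq_singleton hi hS
  have h31 : Nonempty ((circulant n S)ᶜ ≃g circulant n {1}) → IsGorensteinDimTwo n S :=
    fun ⟨φ⟩ => isGorensteinDimTwo_of_iso_circulant_one hn φ
  exact ⟨⟨h12, h31 ∘ h23⟩, ⟨h23 ∘ h12, h31⟩⟩

/-- Characterization of Gorenstein circulant graphs of dimension 2. The following are
equivalent for `G = C_n(S)`, `n ≥ 4`:
(1) the complement of `G` is connected, `G` has no independent 3-set, and `N_2 = n`
    (i.e. `G` is Gorenstein of dimension 2);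
(2) `S̄ = {i}` for some `i` with `gcd(n, i) = 1`;
(3) the complement of `G` is isomorphic to the cycle graph `C_n({1})` (an `n`-gon). -/
theorem stmt16 (n : ℕ) (hn : 4 ≤ n) (S : Finset ℕ) (hS : S ⊆ Finset.Icc 1 (n / 2)) :
    (((circulant n S)ᶜ.Connected ∧
        (¬ ∃ A : Finset (ZMod n), A.card = 3 ∧
          ∀ u ∈ A, ∀ v ∈ A, ¬ (circulant n S).Adj u v) ∧
        Nk n S 2 = n)
      ↔ ∃ i : ℕ, Nat.gcd n i = 1 ∧ Finset.Icc 1 (n / 2) \ S = {i})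
    ∧
    (((circulant n S)ᶜ.Connected ∧
        (¬ ∃ A : Finset (ZMod n), A.card = 3 ∧
          ∀ u ∈ A, ∀ v ∈ A, ¬ (circulant n S).Adj u v) ∧
        Nk n S 2 = n)
      ↔ Nonempty ((circulant n S)ᶜ ≃g circulant n ({1} : Finset ℕ))) :=
  stmt16_general n hn S
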